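/- Let B₁ = [[1,0,0],[0,−1,0],[0,0,0]] and B₂ = [[2,−1,0],[−1,0,0],[0,0,0]] as real symmetric 3×3 matrices, and let M = {(xᵀB₁x, xᵀB₂x) : x ∈ ℝ³}. Then (1,1) lies in the closure of M but (1,1) ∉ M; in particular M is not closed. -/

import Mathlib

/-!
The two forms are `x₀² - x₁²` and `2x₀² - 2x₀x₁`, whose difference is `(x₀ - x₁)² ≥ 0`. If both
equalled `1`, then `x₀ = x₁` and the first form would vanish. On the other hand the vectors
`(1/(2t), 1/(2t) - t, 0)` are sent to `(1 - t², 1)`, which tends to `(1, 1)` as `t → 0`.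
-/

open Matrix Filter Topology

def B₁ : Matrix (Fin 3) (Fin 3) ℝ := !![1,0,0;0,-1,0;0,0,0]

def B₂ : Matrix (Fin 3) (Fin 3) ℝ := !![2,-1,0;-1,0,0;0,0,0]

def quadPair (x : Fin 3 → ℝ) : ℝ × ℝ := (x ⬝ᵥ B₁ *ᵥ x, x ⬝ᵥ B₂ *ᵥ x)

def jointRange : Set (ℝ × ℝ) := {y | ∃ x : Fin 3 → ℝ, y = quadPair x}

lemma quadPair_apply (x : Fin 3 → ℝ) :
    quadPair x = (x 0 ^ 2 - x 1 ^ 2, 2 * x 0 ^ 2 - 2 * x 0 * x 1) := by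
  simp only [quadPair, B₁, B₂, mulVec, dotProduct, Fin.sum_univ_three, of_apply, cons_val',
    cons_val_zero, cons_val_one, cons_val_two, empty_val', cons_val_fin_one, head_cons,
    tail_cons, head_fin_const]
  ext <;> ring

lemma one_one_notMem_jointRange : ((1, 1) : ℝ × ℝ) ∉ jointRange := by
  rintro ⟨x, hx⟩
  rw [quadPair_apply, Prod.mk.injEq] at hx
  obtain ⟨h₁, h₂⟩ := hx
  have hdiag : x 0 = x 1 := by nlinarith [sq_nonneg (x 0 - x 1)]
  rw [hdiag, sub_self] at h₁
  exact one_ne_zero h₁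

lemma quadPair_of_ne_zero {t : ℝ} (ht : t ≠ 0) :
    quadPair ![1 / (2 * t), 1 / (2 * t) - t, 0] = (1 - t ^ 2, 1) := by
  rw [quadPair_apply]
  simp only [cons_val_zero, cons_val_one]
  ext <;> field_simp <;> ring

lemma one_one_mem_closure_jointRange : ((1, 1) : ℝ × ℝ) ∈ closure jointRange := by
  have hlim : Tendsto (fun t : ℝ => ((1 - t ^ 2, 1) : ℝ × ℝ)) (𝓝[≠] 0) (𝓝 (1, 1)) :=
    ((by fun_prop : Continuous fun t : ℝ => ((1 - t ^ 2, 1) : ℝ × ℝ)).tendsto' 0 (1, 1)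
      (by simp)).mono_left nhdsWithin_le_nhds
  refine mem_closure_of_tendsto hlim (eventually_nhdsWithin_of_forall fun t ht => ?_)
  exact ⟨_, (quadPair_of_ne_zero ht).symm⟩

theorem not_closed_example :
    (1, 1) ∈ closure {y : ℝ × ℝ | ∃ x : Fin 3 → ℝ,
        y = (x ⬝ᵥ (!![1,0,0;0,-1,0;0,0,0] : Matrix (Fin 3) (Fin 3) ℝ) *ᵥ x,
             x ⬝ᵥ (!![2,-1,0;-1,0,0;0,0,0] : Matrix (Fin 3) (Fin 3) ℝ) *ᵥ x)} ∧
    (1, 1) ∉ {y : ℝ × ℝ | ∃ x : Fin 3 → ℝ,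
        y = (x ⬝ᵥ (!![1,0,0;0,-1,0;0,0,0] : Matrix (Fin 3) (Fin 3) ℝ) *ᵥ x,
             x ⬝ᵥ (!![2,-1,0;-1,0,0;0,0,0] : Matrix (Fin 3) (Fin 3) ℝ) *ᵥ x)} ∧
    ¬ IsClosed {y : ℝ × ℝ | ∃ x : Fin 3 → ℝ,
        y = (x ⬝ᵥ (!![1,0,0;0,-1,0;0,0,0] : Matrix (Fin 3) (Fin 3) ℝ) *ᵥ x,
             x ⬝ᵥ (!![2,-1,0;-1,0,0;0,0,0] : Matrix (Fin 3) (Fin 3) ℝ) *ᵥ x)} :=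
  ⟨one_one_mem_closure_jointRange, one_one_notMem_jointRange,
    fun hclosed =>
      one_one_notMem_jointRange (hclosed.closure_subset one_one_mem_closure_jointRange)⟩
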